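/- arXiv:1705.04241 — 5 statements merged into one kernel-verified Lean document; each statement's English description precedes it below -/
import Mathlib

section
/- Let d ≥ 1, let G_1,…,G_d̄ be a partition of {1,…,d} into nonempty disjoint groups, let α ∈ ℝ^d̄ have strictly positive entries, and let p, q, s, t ∈ [1,∞] satisfy 1/p + 1/q = 1 and 1/s + 1/t = 1. Then for all a, b ∈ ℝ^d, the Hölder-type inequality aᵀb ≤ ‖a‖_{α-(p,s)} · ‖b‖_{α⁻¹-(q,t)} holds. -/
open scoped ENNReal BigOperators
open MeasureTheory Filter

/-- The l_p norm (p ∈ [1,∞], with sup modification at p = ∞) of a finite real vector. -/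
noncomputable def lpn (p : ℝ≥0∞) {ι : Type} [Fintype ι] (x : ι → ℝ) : ℝ :=
  ‖(WithLp.equiv p (ι → ℝ)).symm x‖

/-- The α-(p,s) groupwise norm: ‖x‖ = ( Σ_i α_i^s ‖x(G_i)‖_p^s )^{1/s}. -/
noncomputable def gnorm {d dbar : ℕ} (G : Fin dbar → Finset (Fin d)) (α : Fin dbar → ℝ)
    (p s : ℝ≥0∞) (x : Fin d → ℝ) : ℝ :=
  lpn s (fun i => α i * lpn p (fun j : {k // k ∈ G i} => x j.1))

/-- G_1, …, G_d̄ form a partition of {1,…,d} into nonempty disjoint groups. -/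
def IsPartition {d dbar : ℕ} (G : Fin dbar → Finset (Fin d)) : Prop :=
  (∀ i, (G i).Nonempty) ∧ (∀ i j, i ≠ j → Disjoint (G i) (G j)) ∧ (∀ k, ∃ i, k ∈ G i)

/- Read off from the norm bound of the ℓᵖ × ℓ^q dual pairing, which covers the endpoint
exponents 1 and ∞ without a case split. -/
lemma sum_mul_le_lpn_mul_lpn {ι : Type} [Fintype ι] {p q : ℝ≥0∞} [hpq : p.HolderConjugate q]
    (x y : ι → ℝ) : ∑ i, x i * y i ≤ lpn p x * lpn q y := by
  have : Fact (1 ≤ p) := ⟨hpq.one_le⟩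
  have : Fact (1 ≤ q) := ⟨hpq.symm.one_le⟩
  let e := (lpPiLpₗᵢ (fun _ : ι => ℝ) ℝ (p := p)).symm ((WithLp.equiv p _).symm x)
  let f := (lpPiLpₗᵢ (fun _ : ι => ℝ) ℝ (p := q)).symm ((WithLp.equiv q _).symm y)
  have hB : ∀ _ : ι, ‖ContinuousLinearMap.mul ℝ ℝ‖ ≤ (1 : NNReal) := fun _ => by simp
  calc ∑ i, x i * y i = lp.dualPairing p q (fun _ => ContinuousLinearMap.mul ℝ ℝ) hB e f := by
        simp [lp.dualPairing_apply, tsum_fintype, e, f, coe_lpPiLpₗᵢ_symm]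
    _ ≤ ‖lp.dualPairing p q (fun _ => ContinuousLinearMap.mul ℝ ℝ) hB‖ * ‖e‖ * ‖f‖ :=
        (Real.le_norm_self _).trans (ContinuousLinearMap.le_opNorm₂ _ _ _)
    _ ≤ 1 * ‖e‖ * ‖f‖ := by gcongr; exact lp.norm_dualPairing _ hB
    _ = lpn p x * lpn q y := by simp [e, f, lpn]

lemma IsPartition.sum_eq_sum_sum {M : Type*} [AddCommMonoid M] {d dbar : ℕ}
    {G : Fin dbar → Finset (Fin d)} (hG : IsPartition G) (f : Fin d → M) :
    ∑ k, f k = ∑ i, ∑ k ∈ G i, f k := by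
  have hcover : Finset.univ.biUnion G = Finset.univ :=
    Finset.eq_univ_of_forall fun k => by simpa using hG.2.2 k
  rw [← Finset.sum_biUnion fun i _ j _ hij => hG.2.1 i j hij, hcover]

theorem statement0_general {d dbar : ℕ}
    (G : Fin dbar → Finset (Fin d)) (hG : IsPartition G)
    (α : Fin dbar → ℝ) (hα : ∀ i, 0 < α i)
    (p q s t : ℝ≥0∞)
    (hpq : 1 / p + 1 / q = 1) (hst : 1 / s + 1 / t = 1)
    (a b : Fin d → ℝ) :
    ∑ k, a k * b k ≤ gnorm G α p s a * gnorm G (fun i => (α i)⁻¹) q t b := by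
  have : p.HolderConjugate q := ENNReal.holderConjugate_iff.mpr (by simpa [one_div] using hpq)
  have : s.HolderConjugate t := ENNReal.holderConjugate_iff.mpr (by simpa [one_div] using hst)
  set u : Fin dbar → ℝ := fun i => α i * lpn p (fun j : {k // k ∈ G i} => a j.1)
  set v : Fin dbar → ℝ := fun i => (α i)⁻¹ * lpn q (fun j : {k // k ∈ G i} => b j.1)
  have hgroup : ∀ i, ∑ k ∈ G i, a k * b k ≤ u i * v i := fun i => by
    have hweights : u i * v i = lpn p (fun j : {k // k ∈ G i} => a j.1) *
        lpn q (fun j : {k // k ∈ G i} => b j.1) := by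
      rw [mul_mul_mul_comm, mul_inv_cancel₀ (hα i).ne', one_mul]
    rw [hweights, ← Finset.sum_coe_sort]
    exact sum_mul_le_lpn_mul_lpn _ _
  calc ∑ k, a k * b k = ∑ i, ∑ k ∈ G i, a k * b k := hG.sum_eq_sum_sum _
    _ ≤ ∑ i, u i * v i := Finset.sum_le_sum fun i _ => hgroup i
    _ ≤ lpn s u * lpn t v := sum_mul_le_lpn_mul_lpn u v

theorem statement0 {d dbar : ℕ} (hd : 1 ≤ d)
    (G : Fin dbar → Finset (Fin d)) (hG : IsPartition G)
    (α : Fin dbar → ℝ) (hα : ∀ i, 0 < α i)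
    (p q s t : ℝ≥0∞) (hp : 1 ≤ p) (hq : 1 ≤ q) (hs : 1 ≤ s) (ht : 1 ≤ t)
    (hpq : 1 / p + 1 / q = 1) (hst : 1 / s + 1 / t = 1)
    (a b : Fin d → ℝ) :
    ∑ k, a k * b k ≤ gnorm G α p s a * gnorm G (fun i => (α i)⁻¹) q t b :=
  statement0_general G hG α hα p q s t hpq hst a b
end

section
/- Let d ≥ 1, let G_1,…,G_d̄ be a partition of {1,…,d} into nonempty disjoint groups, let α ∈ ℝ^d̄ have strictly positive entries, let 1 < p, s < ∞, and let a, b ∈ ℝ^d with a ≠ 0. Then equality ‖a + b‖_{α-(p,s)} = ‖a‖_{α-(p,s)} + ‖b‖_{α-(p,s)} holds if and only if there exists a nonnegative real number τ such that τ·a = b. -/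
open scoped ENNReal BigOperators
open MeasureTheory Filter

/-!
The map `x ↦ (α i • x(G i))ᵢ` is linear, injective because the groups cover the index set and the
weights are nonzero, and the α-(p,s) norm is the pullback along it of the norm of the ℓ_s-product
of the ℓ_p-spaces on the groups. For `1 < p, s < ∞` that product is strictly convex: the `s`-th
power of its norm is a sum of strictly convex functions. In a strictly convex space
`‖u + v‖ = ‖u‖ + ‖v‖` holds exactly when `u` and `v` lie on the same ray, and an injective linear
map reflects rays.
-/

open Set Function

section StrictConvexity

variable {E : Type*} [NormedAddCommGroup E] [NormedSpace ℝ E]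

theorem strictConvexOn_norm_rpow [StrictConvexSpace ℝ E] {q : ℝ} (hq : 1 < q) :
    StrictConvexOn ℝ univ fun x : E => ‖x‖ ^ q := by
  refine ⟨convex_univ, fun x _ y _ hxy a b ha hb hab => ?_⟩
  have hq0 : 0 < q := by linarith
  rcases eq_or_ne ‖x‖ ‖y‖ with h | h
  · calc ‖a • x + b • y‖ ^ q < ‖x‖ ^ q :=
          Real.rpow_lt_rpow (norm_nonneg _) (norm_combo_lt_of_ne le_rfl h.ge hxy ha hb hab) hq0
      _ = a • ‖x‖ ^ q + b • ‖y‖ ^ q := by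
          rw [← h, smul_eq_mul, smul_eq_mul, ← add_mul, hab, one_mul]
  · have htri : ‖a • x + b • y‖ ≤ a • ‖x‖ + b • ‖y‖ := by
      refine (norm_add_le _ _).trans_eq ?_
      rw [norm_smul, norm_smul, Real.norm_of_nonneg ha.le, Real.norm_of_nonneg hb.le]
      rfl
    calc ‖a • x + b • y‖ ^ q ≤ (a • ‖x‖ + b • ‖y‖) ^ q :=
          Real.rpow_le_rpow (norm_nonneg _) htri hq0.le
      _ < a • ‖x‖ ^ q + b • ‖y‖ ^ q :=
          (strictConvexOn_rpow hq).2 (norm_nonneg x) (norm_nonneg y) h ha hb hab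

theorem StrictConvexSpace.of_strictConvexOn_norm_rpow {q : ℝ}
    (h : StrictConvexOn ℝ univ fun x : E => ‖x‖ ^ q) : StrictConvexSpace ℝ E := by
  refine StrictConvexSpace.of_norm_add fun x y hx hy hxy => ?_
  rcases eq_or_ne x y with rfl | hne
  · exact SameRay.refl _
  · have hmid := h.2 (mem_univ x) (mem_univ y) hne one_half_pos one_half_pos (by norm_num)
    dsimp only at hmid
    rw [← smul_add, norm_smul, hxy, hx, hy] at hmid
    norm_num at hmid

end StrictConvexity

theorem strictConvexOn_univ_sum_pi {ι : Type*} [Fintype ι] {E : ι → Type*}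
    [∀ i, AddCommGroup (E i)] [∀ i, Module ℝ (E i)] {F : ∀ i, E i → ℝ}
    (hF : ∀ i, StrictConvexOn ℝ univ (F i)) :
    StrictConvexOn ℝ univ fun x : ∀ i, E i => ∑ i, F i (x i) := by
  refine ⟨convex_univ, fun x _ y _ hxy a b ha hb hab => ?_⟩
  obtain ⟨i₀, hi₀⟩ : ∃ i, x i ≠ y i := ne_iff.mp hxy
  calc ∑ i, F i ((a • x + b • y) i) < ∑ i, (a • F i (x i) + b • F i (y i)) :=
        Finset.sum_lt_sum
          (fun i _ => (hF i).convexOn.2 (mem_univ _) (mem_univ _) ha.le hb.le hab)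
          ⟨i₀, Finset.mem_univ _, (hF i₀).2 (mem_univ _) (mem_univ _) hi₀ ha hb hab⟩
    _ = a • ∑ i, F i (x i) + b • ∑ i, F i (y i) := by
        simp only [Finset.sum_add_distrib, Finset.smul_sum]

namespace PiLp

variable {ι : Type*} [Fintype ι] {p : ℝ≥0∞}

theorem norm_eq_of_forall_norm_eq {β γ : ι → Type*} [∀ i, Norm (β i)]
    [∀ i, Norm (γ i)] {f : PiLp p β} {g : PiLp p γ} (h : ∀ i, ‖f i‖ = ‖g i‖) : ‖f‖ = ‖g‖ := by
  rcases p.trichotomy with rfl | rfl | hp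
  · simp only [norm_eq_card, h]
  · simp only [norm_eq_ciSup, h]
  · simp only [norm_eq_sum hp, h]

theorem norm_rpow_eq_sum {β : ι → Type*} [∀ i, SeminormedAddCommGroup (β i)]
    (hp : 0 < p.toReal) (f : PiLp p β) : ‖f‖ ^ p.toReal = ∑ i, ‖f i‖ ^ p.toReal := by
  rw [norm_eq_sum hp, ← Real.rpow_mul (Finset.sum_nonneg fun _ _ => by positivity),
    one_div_mul_cancel hp.ne', Real.rpow_one]

theorem strictConvexSpace {β : ι → Type*} [∀ i, NormedAddCommGroup (β i)]
    [∀ i, NormedSpace ℝ (β i)] [∀ i, StrictConvexSpace ℝ (β i)] [Fact (1 ≤ p)]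
    (hp : 1 < p.toReal) : StrictConvexSpace ℝ (PiLp p β) := by
  refine StrictConvexSpace.of_strictConvexOn_norm_rpow (q := p.toReal)
    ⟨convex_univ, fun x _ y _ hxy a b ha hb hab => ?_⟩
  have hsum := (strictConvexOn_univ_sum_pi fun i => strictConvexOn_norm_rpow (E := β i) hp).2
    (mem_univ x.ofLp) (mem_univ y.ofLp) (WithLp.ofLp_injective p |>.ne hxy) ha hb hab
  simpa only [norm_rpow_eq_sum (by linarith : 0 < p.toReal), WithLp.ofLp_add, WithLp.ofLp_smul]
    using hsum

end PiLp

section GroupEmbedding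

variable {ι κ : Type*} (G : κ → Finset ι) (α : κ → ℝ) (p s : ℝ≥0∞)

def groupEmbedding : (ι → ℝ) →ₗ[ℝ] PiLp s fun i => PiLp p fun _ : G i => ℝ where
  toFun x := WithLp.toLp s fun i => α i • WithLp.toLp p fun j : G i => x j
  map_add' x y := by ext i j; exact mul_add _ _ _
  map_smul' c x := by ext i j; exact mul_left_comm _ _ _

variable {G α p s}

theorem groupEmbedding_apply (x : ι → ℝ) (i : κ) (j : G i) :
    groupEmbedding G α p s x i j = α i * x j := rfl

theorem groupEmbedding_injective (hcover : ∀ k, ∃ i, k ∈ G i) (hα : ∀ i, α i ≠ 0) :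
    Injective (groupEmbedding G α p s) := by
  intro x y hxy
  funext k
  obtain ⟨i, hk⟩ := hcover k
  have := congrArg (fun z => z i ⟨k, hk⟩) hxy
  simp only [groupEmbedding_apply] at this
  exact mul_left_cancel₀ (hα i) this

end GroupEmbedding

theorem gnorm_eq_norm_groupEmbedding {d dbar : ℕ} (G : Fin dbar → Finset (Fin d))
    (α : Fin dbar → ℝ) (p s : ℝ≥0∞) [Fact (1 ≤ p)] (x : Fin d → ℝ) :
    gnorm G α p s x = ‖groupEmbedding G α p s x‖ := by
  refine PiLp.norm_eq_of_forall_norm_eq fun i => ?_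
  change ‖α i * lpn p _‖ = ‖α i • WithLp.toLp p fun j : G i => x j‖
  rw [norm_smul, norm_mul, lpn, norm_norm]
  rfl

theorem gnorm_add_eq_add_iff_sameRay {d dbar : ℕ} {G : Fin dbar → Finset (Fin d)}
    {α : Fin dbar → ℝ} {p s : ℝ≥0∞} [Fact (1 ≤ p)] [Fact (1 ≤ s)] (hp : 1 < p.toReal)
    (hs : 1 < s.toReal) (hcover : ∀ k, ∃ i, k ∈ G i) (hα : ∀ i, α i ≠ 0) (a b : Fin d → ℝ) :
    gnorm G α p s (a + b) = gnorm G α p s a + gnorm G α p s b ↔ SameRay ℝ a b := by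
  have := fun i => PiLp.strictConvexSpace (β := fun _ : G i => ℝ) hp
  have := PiLp.strictConvexSpace (β := fun i => PiLp p fun _ : G i => ℝ) hs
  simp only [gnorm_eq_norm_groupEmbedding, map_add, ← sameRay_iff_norm_add,
    (groupEmbedding_injective hcover hα).sameRay_map_iff]

theorem statement3_general {d dbar : ℕ}
    (G : Fin dbar → Finset (Fin d)) (hG : IsPartition G)
    (α : Fin dbar → ℝ) (hα : ∀ i, 0 < α i)
    (p s : ℝ) (hp : 1 < p) (hs : 1 < s)
    (a b : Fin d → ℝ) (ha : a ≠ 0) :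
    gnorm G α (ENNReal.ofReal p) (ENNReal.ofReal s) (a + b) =
        gnorm G α (ENNReal.ofReal p) (ENNReal.ofReal s) a +
          gnorm G α (ENNReal.ofReal p) (ENNReal.ofReal s) b
      ↔ ∃ τ : ℝ, 0 ≤ τ ∧ τ • a = b := by
  have : Fact (1 ≤ ENNReal.ofReal p) := ⟨ENNReal.one_le_ofReal.mpr hp.le⟩
  have : Fact (1 ≤ ENNReal.ofReal s) := ⟨ENNReal.one_le_ofReal.mpr hs.le⟩
  have hp' : 1 < (ENNReal.ofReal p).toReal := by rwa [ENNReal.toReal_ofReal (by linarith)]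
  have hs' : 1 < (ENNReal.ofReal s).toReal := by rwa [ENNReal.toReal_ofReal (by linarith)]
  rw [gnorm_add_eq_add_iff_sameRay hp' hs' hG.2.2 (fun i => (hα i).ne'),
    exists_nonneg_left_iff_sameRay ha]

theorem statement3 {d dbar : ℕ} (hd : 1 ≤ d)
    (G : Fin dbar → Finset (Fin d)) (hG : IsPartition G)
    (α : Fin dbar → ℝ) (hα : ∀ i, 0 < α i)
    (p s : ℝ) (hp : 1 < p) (hs : 1 < s)
    (a b : Fin d → ℝ) (ha : a ≠ 0) :
    gnorm G α (ENNReal.ofReal p) (ENNReal.ofReal s) (a + b) =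
        gnorm G α (ENNReal.ofReal p) (ENNReal.ofReal s) a +
          gnorm G α (ENNReal.ofReal p) (ENNReal.ofReal s) b
      ↔ ∃ τ : ℝ, 0 ≤ τ ∧ τ • a = b :=
  statement3_general G hG α hα p s hp hs a b ha
end

section
/- (DRO representation for Group-Square-Root-Lasso linear regression.) Let (X_1,Y_1),…,(X_n,Y_n) ∈ ℝ^d × ℝ, let P_n be their empirical measure, let q, t ∈ [1,∞] with conjugates p, s (1/p + 1/q = 1, 1/s + 1/t = 1), let α ∈ ℝ^d̄ have strictly positive entries, and let c be the cost function c((x,y),(x',y')) = ‖x − x'‖_{α⁻¹-(q,t)}² if y = y' and +∞ otherwise. Then for every δ > 0, min over β ∈ ℝ^d of sup { (E_P[(Y − XᵀB β)²])^{1/2} : P a probability measure on ℝ^{d+1} with D_c(P, P_n) ≤ δ } equals min over β ∈ ℝ^d of (E_{P_n}[(Y − Xᵀβ)²])^{1/2} + √δ · ‖β‖_{α-(p,s)}. -/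
/-!
The α⁻¹-(q,t) norm `N` and the α-(p,s) norm are dual to each other: groupwise Hölder gives
`|⟨v, β⟩| ≤ N v · ‖β‖`, and gluing norming vectors of the groups gives a `v` with `N v ≤ 1`,
`⟨v, β⟩ = ‖β‖`. The cost never moves labels, so along a coupling of `P` with `P_n` the residual
changes by at most `N (x - x') · ‖β‖`, and Minkowski's inequality in `L²` of the coupling bounds
the RMSE under `P` by the empirical RMSE plus `√δ · ‖β‖`. The bound is attained by shifting each
`X_i` by `-√δ wᵢ v`, where `w` is the residual vector rescaled to mean square one: this costs
exactly `δ` and multiplies every residual by the same factor.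
-/

open scoped ENNReal BigOperators
open MeasureTheory Filter

/-- Optimal transport discrepancy with cost `c`: the Kantorovich infimum over couplings of
`P` and `Q`. -/
noncomputable def Dc {E : Type} [MeasurableSpace E] (c : E → E → ℝ≥0∞)
    (P Q : Measure E) : ℝ≥0∞ :=
  ⨅ (π : Measure (E × E)) (_ : π.map Prod.fst = P) (_ : π.map Prod.snd = Q),
    ∫⁻ z, c z.1 z.2 ∂π

open Topology

section Lpn

variable {ι : Type} [Fintype ι] {p q : ℝ≥0∞}

lemma lpn_nonneg (hp : 1 ≤ p) (x : ι → ℝ) : 0 ≤ lpn p x :=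
  have := Fact.mk hp; norm_nonneg _

lemma lpn_smul (hp : 1 ≤ p) (c : ℝ) (x : ι → ℝ) : lpn p (c • x) = |c| * lpn p x :=
  have := Fact.mk hp; norm_smul c ((WithLp.equiv p (ι → ℝ)).symm x)

lemma continuous_lpn (hp : 1 ≤ p) : Continuous (lpn p : (ι → ℝ) → ℝ) :=
  have := Fact.mk hp; continuous_norm.comp (PiLp.continuous_toLp p _)

lemma lpn_eq_sum (hp : 0 < p.toReal) (x : ι → ℝ) :
    lpn p x = (∑ i, |x i| ^ p.toReal) ^ (1 / p.toReal) := by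
  simp [lpn, PiLp.norm_eq_sum hp, Real.norm_eq_abs]

lemma lpn_top (x : ι → ℝ) : lpn ∞ x = ⨆ i, |x i| := by
  simp [lpn, PiLp.norm_eq_ciSup, Real.norm_eq_abs]

lemma lpn_one (x : ι → ℝ) : lpn 1 x = ∑ i, |x i| := by
  simp [lpn_eq_sum (p := 1) (by simp)]

lemma lpn_mono (hp : 1 ≤ p) {x y : ι → ℝ} (h : ∀ i, |x i| ≤ |y i|) : lpn p x ≤ lpn p y := by
  rcases eq_or_ne p ∞ with rfl | hp'
  · rw [lpn_top, lpn_top]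
    exact Real.iSup_le
      (fun i => (h i).trans (le_ciSup (f := fun i => |y i|) (Set.finite_range _).bddAbove i))
      (Real.iSup_nonneg fun i => abs_nonneg _)
  · have hpr : 0 < p.toReal := ENNReal.toReal_pos (one_pos.trans_le hp).ne' hp'
    rw [lpn_eq_sum hpr, lpn_eq_sum hpr]
    exact Real.rpow_le_rpow (by positivity)
      (Finset.sum_le_sum fun i _ => Real.rpow_le_rpow (abs_nonneg _) (h i) hpr.le) (by positivity)

lemma abs_sum_mul_le_lpn_mul_lpn [p.HolderConjugate q] (x y : ι → ℝ) :
    |∑ i, x i * y i| ≤ lpn p x * lpn q y := by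
  have holder_one_top : ∀ x y : ι → ℝ, |∑ i, x i * y i| ≤ lpn 1 x * lpn ∞ y := fun x y => by
    rw [lpn_one, lpn_top, Finset.sum_mul]
    refine (Finset.abs_sum_le_sum_abs _ _).trans (Finset.sum_le_sum fun i _ => ?_)
    rw [abs_mul]
    exact mul_le_mul_of_nonneg_left
      (le_ciSup (Set.finite_range fun i => |y i|).bddAbove i) (abs_nonneg _)
  rcases eq_or_ne p ∞ with rfl | hp
  · rw [(ENNReal.HolderConjugate.eq_top_iff_eq_one ∞ q).mp rfl, mul_comm]
    simpa only [mul_comm (x _)] using holder_one_top y x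
  rcases eq_or_ne q ∞ with rfl | hq
  · rw [(ENNReal.HolderConjugate.eq_top_iff_eq_one ∞ p).mp rfl]
    exact holder_one_top x y
  have hpq' := ENNReal.HolderConjugate.toReal_of_ne_top hp hq
  rw [lpn_eq_sum hpq'.pos, lpn_eq_sum hpq'.symm.pos]
  refine (Finset.abs_sum_le_sum_abs _ _).trans ?_
  simpa [abs_mul] using Real.inner_le_Lp_mul_Lq Finset.univ (fun i => |x i|) (fun i => |y i|) hpq'

lemma abs_sign_le_one (r : ℝ) : |(SignType.sign r : ℝ)| ≤ 1 := by
  rcases SignType.sign r with _ | _ | _ <;> simp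

lemma exists_lpn_le_one_sum_mul_eq [p.HolderConjugate q] (y : ι → ℝ) :
    ∃ x : ι → ℝ, lpn q x ≤ 1 ∧ ∑ i, x i * y i = lpn p y := by
  classical
  rcases eq_or_ne p ∞ with rfl | hp
  · rw [(ENNReal.HolderConjugate.eq_top_iff_eq_one ∞ q).mp rfl]
    rcases isEmpty_or_nonempty ι with hι | hι
    · exact ⟨0, by simp [lpn_one], by simp [lpn_top]⟩
    obtain ⟨i₀, hi₀⟩ := exists_eq_ciSup_of_finite (f := fun i => |y i|)
    refine ⟨Pi.single i₀ (SignType.sign (y i₀) : ℝ), ?_, ?_⟩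
    · simpa [lpn_one, Pi.single_apply, apply_ite] using abs_sign_le_one (y i₀)
    · simp [lpn_top, ← hi₀, Pi.single_apply, ite_mul]
  rcases eq_or_ne q ∞ with rfl | hq
  · rw [(ENNReal.HolderConjugate.eq_top_iff_eq_one ∞ p).mp rfl]
    refine ⟨fun i => SignType.sign (y i), ?_, by simp [lpn_one]⟩
    rw [lpn_top]
    exact Real.iSup_le (fun i => abs_sign_le_one (y i)) zero_le_one
  have hpq' := ENNReal.HolderConjugate.toReal_of_ne_top hp hq
  obtain ⟨⟨g, hg, hgy⟩, -⟩ := NNReal.isGreatest_Lp Finset.univ (fun i => ‖y i‖₊) hpq'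
  refine ⟨fun i => SignType.sign (y i) * g i, ?_, ?_⟩
  · have hg' : ∑ i, (g i : ℝ) ^ q.toReal ≤ 1 := by exact_mod_cast hg
    rw [lpn_eq_sum hpq'.symm.pos]
    refine Real.rpow_le_one (by positivity)
      ((Finset.sum_le_sum fun i _ => ?_).trans hg') (by positivity)
    gcongr
    rw [abs_mul, NNReal.abs_eq]
    exact mul_le_of_le_one_left (g i).2 (abs_sign_le_one _)
  · rw [lpn_eq_sum hpq'.pos]
    have hgy' : ∑ i, |y i| * g i = (∑ i, |y i| ^ p.toReal) ^ (1 / p.toReal) := by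
      simpa [Real.norm_eq_abs] using congrArg NNReal.toReal hgy
    rw [← hgy']
    exact Finset.sum_congr rfl fun i _ => by rw [mul_right_comm, sign_mul_self, mul_comm]

end Lpn

namespace IsPartition

variable {d dbar : ℕ} {G : Fin dbar → Finset (Fin d)}

lemma sum_eq (hG : IsPartition G) (f : Fin d → ℝ) :
    ∑ k, f k = ∑ i, ∑ j : {k // k ∈ G i}, f j := by
  have huniv : Finset.univ.biUnion G = Finset.univ :=
    Finset.eq_univ_of_forall fun k => Finset.mem_biUnion.mpr (by simpa using hG.2.2 k)
  rw [← huniv, Finset.sum_biUnion fun i _ j _ hij => hG.2.1 i j hij]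
  exact Finset.sum_congr rfl fun i _ => (Finset.sum_coe_sort (G i) f).symm

lemma exists_restrict_eq (hG : IsPartition G) (w : ∀ i, {k // k ∈ G i} → ℝ) :
    ∃ v : Fin d → ℝ, ∀ i (j : {k // k ∈ G i}), v j = w i j := by
  choose I hI using hG.2.2
  refine ⟨fun k => w (I k) ⟨k, hI k⟩, fun i ⟨k, hk⟩ => ?_⟩
  obtain rfl : I k = i := by
    by_contra hne
    exact Finset.disjoint_left.mp (hG.2.1 _ _ hne) (hI k) hk
  rfl

end IsPartition

section GroupNorm

variable {d dbar : ℕ} {G : Fin dbar → Finset (Fin d)} {α : Fin dbar → ℝ} {p q s t : ℝ≥0∞}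

lemma gnorm_nonneg (hs : 1 ≤ s) (x : Fin d → ℝ) : 0 ≤ gnorm G α p s x :=
  lpn_nonneg hs _

lemma gnorm_smul (hp : 1 ≤ p) (hs : 1 ≤ s) (c : ℝ) (x : Fin d → ℝ) :
    gnorm G α p s (c • x) = |c| * gnorm G α p s x := by
  have hgroup : ∀ i, α i * lpn p (fun j : {k // k ∈ G i} => (c • x) j)
      = |c| * (α i * lpn p (fun j : {k // k ∈ G i} => x j)) := fun i => by
    rw [show (fun j : {k // k ∈ G i} => (c • x) j) = c • fun j : {k // k ∈ G i} => x j from rfl,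
      lpn_smul hp]
    ring
  simp only [gnorm, hgroup]
  exact lpn_smul hs |c| _ |>.trans (by rw [abs_abs])

lemma continuous_gnorm (hp : 1 ≤ p) (hs : 1 ≤ s) : Continuous (gnorm G α p s) :=
  (continuous_lpn hs).comp <| continuous_pi fun _ => continuous_const.mul <|
    (continuous_lpn hp).comp <| continuous_pi fun j => continuous_apply j.1

variable [p.HolderConjugate q] [s.HolderConjugate t]

lemma abs_sum_mul_le_gnorm_mul_gnorm (hG : IsPartition G) (hα : ∀ i, 0 < α i)
    (v β : Fin d → ℝ) :
    |∑ k, v k * β k| ≤ gnorm G (fun i => (α i)⁻¹) q t v * gnorm G α p s β := by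
  set A := fun i => (α i)⁻¹ * lpn q (fun j : {k // k ∈ G i} => v j)
  set B := fun i => α i * lpn p (fun j : {k // k ∈ G i} => β j)
  calc |∑ k, v k * β k| = |∑ i, ∑ j : {k // k ∈ G i}, v j * β j| := by rw [hG.sum_eq]
    _ ≤ ∑ i, |∑ j : {k // k ∈ G i}, v j * β j| := Finset.abs_sum_le_sum_abs _ _
    _ ≤ ∑ i, A i * B i := Finset.sum_le_sum fun i _ => by
        have hAB : A i * B i = lpn q (fun j : {k // k ∈ G i} => v j)
            * lpn p (fun j : {k // k ∈ G i} => β j) := by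
          simp only [A, B]
          field_simp [(hα i).ne']
        exact hAB ▸ abs_sum_mul_le_lpn_mul_lpn _ _
    _ ≤ |∑ i, A i * B i| := le_abs_self _
    _ ≤ lpn t A * lpn s B := abs_sum_mul_le_lpn_mul_lpn A B

lemma exists_gnorm_le_one_sum_mul_eq (hG : IsPartition G) (hα : ∀ i, 0 < α i) (β : Fin d → ℝ) :
    ∃ v : Fin d → ℝ, gnorm G (fun i => (α i)⁻¹) q t v ≤ 1 ∧
      ∑ k, v k * β k = gnorm G α p s β := by
  choose w hw1 hw2 using fun i =>
    exists_lpn_le_one_sum_mul_eq (p := p) (q := q) fun j : {k // k ∈ G i} => β j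
  obtain ⟨c, hc1, hc2⟩ := exists_lpn_le_one_sum_mul_eq (p := s) (q := t)
    fun i => α i * lpn p fun j : {k // k ∈ G i} => β j
  obtain ⟨v, hv⟩ := hG.exists_restrict_eq fun i => (c i * α i) • w i
  have hvG : ∀ i, (fun j : {k // k ∈ G i} => v j) = (c i * α i) • w i := fun i => funext (hv i)
  refine ⟨v, (lpn_mono (ENNReal.HolderConjugate.one_le t s) fun i => ?_).trans hc1, ?_⟩
  · have hentry : |(α i)⁻¹ * (|c i * α i| * lpn q (w i))| = |c i| * lpn q (w i) := by
      rw [abs_of_nonneg (mul_nonneg (inv_nonneg.mpr (hα i).le)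
        (mul_nonneg (abs_nonneg _) (lpn_nonneg (ENNReal.HolderConjugate.one_le q p) _))),
        abs_mul, abs_of_pos (hα i)]
      field_simp [(hα i).ne']
    beta_reduce
    rw [hvG, lpn_smul (ENNReal.HolderConjugate.one_le q p), hentry]
    exact mul_le_of_le_one_right (abs_nonneg _) (hw1 i)
  · rw [hG.sum_eq, gnorm, ← hc2]
    refine Finset.sum_congr rfl fun i _ => ?_
    simp only [hv, Pi.smul_apply, smul_eq_mul, ← hw2 i, Finset.mul_sum]
    exact Finset.sum_congr rfl fun j _ => by ring

end GroupNorm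

lemma Dc_le_lintegral {E : Type} [MeasurableSpace E] {c : E → E → ℝ≥0∞} {P Q : Measure E}
    {π : Measure (E × E)} (h₁ : π.map Prod.fst = P) (h₂ : π.map Prod.snd = Q) :
    Dc c P Q ≤ ∫⁻ z, c z.1 z.2 ∂π :=
  iInf_le_of_le π <| iInf_le_of_le h₁ <| iInf_le _ h₂

lemma sq_rpow_one_half (x : ℝ≥0∞) : (x ^ 2) ^ (1 / 2 : ℝ) = x := by
  simpa [one_div] using ENNReal.pow_rpow_inv_natCast two_ne_zero x

lemma lintegral_sq_rpow_half_map_fst_le {E : Type} [MeasurableSpace E] {π : Measure (E × E)}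
    {F : E → ℝ≥0∞} (hF : Measurable F) {g : E × E → ℝ≥0∞} (hg : AEMeasurable g π)
    (h : ∀ᵐ z ∂π, F z.1 ≤ F z.2 + g z) :
    (∫⁻ x, F x ^ 2 ∂π.map Prod.fst) ^ (1 / 2 : ℝ)
      ≤ (∫⁻ x, F x ^ 2 ∂π.map Prod.snd) ^ (1 / 2 : ℝ) + (∫⁻ z, g z ^ 2 ∂π) ^ (1 / 2 : ℝ) := by
  rw [lintegral_map (hF.pow_const 2) measurable_fst,
    lintegral_map (hF.pow_const 2) measurable_snd]
  simp only [← ENNReal.rpow_two]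
  calc (∫⁻ z, F z.1 ^ (2 : ℝ) ∂π) ^ (1 / 2 : ℝ)
      ≤ (∫⁻ z, (F z.2 + g z) ^ (2 : ℝ) ∂π) ^ (1 / 2 : ℝ) := by
        gcongr ?_ ^ _
        exact lintegral_mono_ae (h.mono fun z hz => by gcongr)
    _ ≤ _ := by
        simpa using ENNReal.lintegral_Lp_add_le (p := 2) (f := fun z => F z.2)
          (hF.comp measurable_snd).aemeasurable hg one_le_two

lemma exists_mean_sq_eq_one_and_eq_rms_mul {n : ℕ} (hn : 0 < n) (Z : Fin n → ℝ) :
    ∃ w : Fin n → ℝ, (n : ℝ)⁻¹ * ∑ i, w i ^ 2 = 1 ∧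
      ∀ i, Z i = √((n : ℝ)⁻¹ * ∑ i, Z i ^ 2) * w i := by
  set S := √((n : ℝ)⁻¹ * ∑ i, Z i ^ 2)
  have hS2 : S ^ 2 = (n : ℝ)⁻¹ * ∑ i, Z i ^ 2 := Real.sq_sqrt (by positivity)
  by_cases hS : S = 0
  · refine ⟨1, by simp [hn.ne'], fun i => ?_⟩
    have hZ : ∑ i, Z i ^ 2 = 0 := by simpa [hS, hn.ne'] using hS2.symm
    simpa [hS] using (Finset.sum_eq_zero_iff_of_nonneg fun i _ => sq_nonneg (Z i)).mp hZ i
  · refine ⟨fun i => Z i / S, ?_, fun i => by field_simp⟩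
    rw [show ∑ i, (Z i / S) ^ 2 = (∑ i, Z i ^ 2) / S ^ 2 by simp only [div_pow, Finset.sum_div],
      ← mul_div_assoc, ← hS2, div_self (pow_ne_zero 2 hS)]

section Empirical

variable {E : Type} [MeasurableSpace E] {n : ℕ}

noncomputable def empiricalMeasure (x : Fin n → E) : Measure E :=
  (n : ℝ≥0∞)⁻¹ • ∑ i, Measure.dirac (x i)

lemma inv_natCast_mul_sum_ofReal (hn : 0 < n) {f : Fin n → ℝ} (hf : ∀ i, 0 ≤ f i) :
    (n : ℝ≥0∞)⁻¹ * ∑ i, ENNReal.ofReal (f i) = ENNReal.ofReal ((n : ℝ)⁻¹ * ∑ i, f i) := by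
  rw [← ENNReal.ofReal_sum_of_nonneg fun i _ => hf i, ENNReal.ofReal_mul (by positivity),
    ENNReal.ofReal_inv_of_pos (by exact_mod_cast hn), ENNReal.ofReal_natCast]

lemma lintegral_empiricalMeasure [MeasurableSingletonClass E] (x : Fin n → E) (f : E → ℝ≥0∞) :
    ∫⁻ z, f z ∂empiricalMeasure x = (n : ℝ≥0∞)⁻¹ * ∑ i, f (x i) := by
  simp [empiricalMeasure, lintegral_finsetSum_measure, lintegral_dirac]

lemma lintegral_ofReal_empiricalMeasure [MeasurableSingletonClass E] (hn : 0 < n)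
    (x : Fin n → E) {f : E → ℝ} (hf : ∀ z, 0 ≤ f z) :
    ∫⁻ z, ENNReal.ofReal (f z) ∂empiricalMeasure x = ENNReal.ofReal ((n : ℝ)⁻¹ * ∑ i, f (x i)) := by
  rw [lintegral_empiricalMeasure, inv_natCast_mul_sum_ofReal hn fun i => hf _]

lemma isProbabilityMeasure_empiricalMeasure (hn : 0 < n) (x : Fin n → E) :
    IsProbabilityMeasure (empiricalMeasure x) := by
  constructor
  simpa [empiricalMeasure, Measure.coe_finsetSum] using
    ENNReal.inv_mul_cancel (by exact_mod_cast hn.ne') (ENNReal.natCast_ne_top n)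

lemma map_empiricalMeasure {F : Type} [MeasurableSpace F] {f : E → F} (hf : Measurable f)
    (x : Fin n → E) : (empiricalMeasure x).map f = empiricalMeasure (f ∘ x) := by
  simp [empiricalMeasure, Measure.map_smul, Measure.map_finset_sum hf.aemeasurable,
    Measure.map_dirac' hf]

end Empirical

section Regression

variable {ι : Type} [Fintype ι]

def linearResidual (β : ι → ℝ) (z : (ι → ℝ) × ℝ) : ℝ := z.2 - ∑ k, z.1 k * β k

noncomputable def labelCost (N : (ι → ℝ) → ℝ) (u w : (ι → ℝ) × ℝ) : ℝ≥0∞ :=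
  if u.2 = w.2 then ENNReal.ofReal (N (u.1 - w.1) ^ 2) else ⊤

lemma continuous_linearResidual (β : ι → ℝ) : Continuous (linearResidual β) := by
  unfold linearResidual; fun_prop

lemma linearResidual_eq_sub_of_snd_eq (β : ι → ℝ) {u w : (ι → ℝ) × ℝ} (h : u.2 = w.2) :
    linearResidual β u = linearResidual β w - ∑ k, (u.1 - w.1) k * β k := by
  simp only [linearResidual, h, Pi.sub_apply, sub_mul, Finset.sum_sub_distrib]
  ring

variable {N : (ι → ℝ) → ℝ}

lemma measurable_labelCost (hN : Continuous N) :
    Measurable fun z : ((ι → ℝ) × ℝ) × ((ι → ℝ) × ℝ) => labelCost N z.1 z.2 :=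
  Measurable.ite (measurableSet_eq_fun (by fun_prop) (by fun_prop)) (by fun_prop) measurable_const

lemma rmse_map_fst_le_of_coupling (hN : Continuous N) (hN0 : ∀ v, 0 ≤ N v) {β : ι → ℝ} {b : ℝ}
    (hb : 0 ≤ b) (hholder : ∀ v, |∑ k, v k * β k| ≤ N v * b)
    {π : Measure (((ι → ℝ) × ℝ) × ((ι → ℝ) × ℝ))} (hπ : ∫⁻ z, labelCost N z.1 z.2 ∂π ≠ ⊤) :
    (∫⁻ z, ENNReal.ofReal (linearResidual β z ^ 2) ∂π.map Prod.fst) ^ (1 / 2 : ℝ)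
      ≤ (∫⁻ z, ENNReal.ofReal (linearResidual β z ^ 2) ∂π.map Prod.snd) ^ (1 / 2 : ℝ)
        + (∫⁻ z, labelCost N z.1 z.2 ∂π) ^ (1 / 2 : ℝ) * ENNReal.ofReal b := by
  have hsq : ∀ z, ENNReal.ofReal (linearResidual β z ^ 2)
      = ENNReal.ofReal |linearResidual β z| ^ 2 := fun z => by
    rw [← ENNReal.ofReal_pow (abs_nonneg _), sq_abs]
  have hlabel : ∀ᵐ z ∂π, z.1.2 = z.2.2 := by
    filter_upwards [ae_lt_top (measurable_labelCost hN) hπ] with z hz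
    by_contra hne
    simp [labelCost, hne] at hz
  set g := fun z : ((ι → ℝ) × ℝ) × ((ι → ℝ) × ℝ) => ENNReal.ofReal (N (z.1.1 - z.2.1) * b)
  have hg : ∀ᵐ z ∂π, g z ^ 2 = ENNReal.ofReal b ^ 2 * labelCost N z.1 z.2 := by
    filter_upwards [hlabel] with z hz
    rw [labelCost, if_pos hz, ← ENNReal.ofReal_pow (mul_nonneg (hN0 _) hb),
      ← ENNReal.ofReal_pow hb, ← ENNReal.ofReal_mul (sq_nonneg _), mul_pow, mul_comm]
  simp only [hsq]
  refine (lintegral_sq_rpow_half_map_fst_le (F := fun z => ENNReal.ofReal |linearResidual β z|)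
    (ENNReal.continuous_ofReal.comp (continuous_linearResidual β).abs).measurable
    (g := g) (by fun_prop) ?_).trans ?_
  · filter_upwards [hlabel] with z hz
    refine (ENNReal.ofReal_le_ofReal ?_).trans ENNReal.ofReal_add_le
    rw [linearResidual_eq_sub_of_snd_eq β hz]
    exact (abs_sub _ _).trans (add_le_add_right (hholder _) _)
  · rw [lintegral_congr_ae hg, lintegral_const_mul _ (measurable_labelCost hN),
      ENNReal.mul_rpow_of_nonneg _ _ (by norm_num), sq_rpow_one_half, mul_comm]

lemma rmse_le_add_sqrt_Dc (hN : Continuous N) (hN0 : ∀ v, 0 ≤ N v) {β : ι → ℝ} {b : ℝ}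
    (hb : 0 ≤ b) (hholder : ∀ v, |∑ k, v k * β k| ≤ N v * b) {P Q : Measure ((ι → ℝ) × ℝ)}
    (hD : Dc (labelCost N) P Q ≠ ⊤) :
    (∫⁻ z, ENNReal.ofReal (linearResidual β z ^ 2) ∂P) ^ (1 / 2 : ℝ)
      ≤ (∫⁻ z, ENNReal.ofReal (linearResidual β z ^ 2) ∂Q) ^ (1 / 2 : ℝ)
        + Dc (labelCost N) P Q ^ (1 / 2 : ℝ) * ENNReal.ofReal b := by
  set bound := fun c : ℝ≥0∞ => (∫⁻ z, ENNReal.ofReal (linearResidual β z ^ 2) ∂Q) ^ (1 / 2 : ℝ)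
    + c ^ (1 / 2 : ℝ) * ENNReal.ofReal b
  have hbound : Continuous bound := continuous_const.add <|
    (ENNReal.continuous_mul_const ENNReal.ofReal_ne_top).comp ENNReal.continuous_rpow_const
  have hgt : ∀ c > Dc (labelCost N) P Q,
      (∫⁻ z, ENNReal.ofReal (linearResidual β z ^ 2) ∂P) ^ (1 / 2 : ℝ) ≤ bound c := fun c hc => by
    obtain ⟨π, rfl, rfl, hπ⟩ : ∃ π : Measure _, π.map Prod.fst = P ∧ π.map Prod.snd = Q ∧
        ∫⁻ z, labelCost N z.1 z.2 ∂π < c := by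
      simpa only [Dc, iInf_lt_iff, exists_prop] using hc
    refine (rmse_map_fst_le_of_coupling hN hN0 hb hholder (hπ.trans_le le_top).ne).trans ?_
    dsimp only [bound]
    gcongr
  -- `Dc` need not be attained: let the cost `c` of nearly optimal couplings decrease to `Dc`.
  have : (𝓝[>] (Dc (labelCost N) P Q)).NeBot := nhdsGT_neBot_of_exists_gt ⟨⊤, hD.lt_top⟩
  exact ge_of_tendsto ((hbound.tendsto _).mono_left nhdsWithin_le_nhds)
    (eventually_nhdsWithin_of_forall (s := Set.Ioi _) hgt)

lemma exists_rmse_eq_add_of_dual (hN0 : ∀ v, 0 ≤ N v)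
    (hNsmul : ∀ (c : ℝ) v, N (c • v) = |c| * N v) {β : ι → ℝ} {b : ℝ} (hb : 0 ≤ b)
    (hdual : ∃ v, N v ≤ 1 ∧ ∑ k, v k * β k = b) {n : ℕ} (hn : 0 < n)
    (x : Fin n → (ι → ℝ) × ℝ) {δ : ℝ} (hδ : 0 ≤ δ) :
    ∃ P : Measure ((ι → ℝ) × ℝ), IsProbabilityMeasure P ∧
      Dc (labelCost N) P (empiricalMeasure x) ≤ ENNReal.ofReal δ ∧
      (∫⁻ z, ENNReal.ofReal (linearResidual β z ^ 2) ∂P) ^ (1 / 2 : ℝ)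
        = (∫⁻ z, ENNReal.ofReal (linearResidual β z ^ 2) ∂empiricalMeasure x) ^ (1 / 2 : ℝ)
          + ENNReal.ofReal (√δ * b) := by
  obtain ⟨v, hv1, hvβ⟩ := hdual
  obtain ⟨w, hw1, hw⟩ := exists_mean_sq_eq_one_and_eq_rms_mul hn fun i => linearResidual β (x i)
  set S := √((n : ℝ)⁻¹ * ∑ i, linearResidual β (x i) ^ 2)
  set x' : Fin n → (ι → ℝ) × ℝ := fun i => ((x i).1 - (√δ * w i) • v, (x i).2)
  have hres : ∀ i, linearResidual β (x' i) = (S + √δ * b) * w i := fun i => by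
    have hshift : ∑ k, (√δ * w i * v k) * β k = √δ * w i * b := by
      rw [← hvβ, Finset.mul_sum]; exact Finset.sum_congr rfl fun k _ => by ring
    have hwi := hw i
    simp only [linearResidual, x', Pi.sub_apply, Pi.smul_apply, smul_eq_mul, sub_mul,
      Finset.sum_sub_distrib, hshift] at hwi ⊢
    linear_combination hwi
  have hcost : ∀ i, labelCost N (x' i) (x i) ≤ ENNReal.ofReal (δ * w i ^ 2) := fun i => by
    rw [labelCost, if_pos rfl]
    refine ENNReal.ofReal_le_ofReal ?_
    have hdiff : (x' i).1 - (x i).1 = (-(√δ * w i)) • v := by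
      simp only [x', sub_sub_cancel_left, neg_smul]
    rw [hdiff, hNsmul, mul_pow, sq_abs, neg_sq, mul_pow, Real.sq_sqrt hδ]
    exact mul_le_of_le_one_right (by positivity) (pow_le_one₀ (hN0 v) hv1)
  refine ⟨empiricalMeasure x', isProbabilityMeasure_empiricalMeasure hn x', ?_, ?_⟩
  · calc Dc (labelCost N) (empiricalMeasure x') (empiricalMeasure x)
        ≤ ∫⁻ z, labelCost N z.1 z.2 ∂empiricalMeasure fun i => (x' i, x i) :=
          Dc_le_lintegral (map_empiricalMeasure measurable_fst _)
            (map_empiricalMeasure measurable_snd _)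
      _ ≤ (n : ℝ≥0∞)⁻¹ * ∑ i, ENNReal.ofReal (δ * w i ^ 2) := by
          rw [lintegral_empiricalMeasure]
          gcongr with i
          exact hcost i
      _ = ENNReal.ofReal δ := by
          rw [inv_natCast_mul_sum_ofReal hn fun i => by positivity, ← Finset.mul_sum,
            mul_left_comm, hw1, mul_one]
  · simp only [lintegral_ofReal_empiricalMeasure hn _ fun z => sq_nonneg (linearResidual β z),
      hres, mul_pow, ← Finset.mul_sum, mul_left_comm _ ((S + √δ * b) ^ 2), hw1, mul_one]
    rw [ENNReal.ofReal_rpow_of_nonneg (by positivity) (by norm_num),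
      ENNReal.ofReal_rpow_of_nonneg (by positivity) (by norm_num), ← Real.sqrt_eq_rpow,
      ← Real.sqrt_eq_rpow, Real.sqrt_sq (by positivity),
      ENNReal.ofReal_add (by positivity) (by positivity)]

theorem iSup_rmse_Dc_le_eq (hN : Continuous N) (hN0 : ∀ v, 0 ≤ N v)
    (hNsmul : ∀ (c : ℝ) v, N (c • v) = |c| * N v) {β : ι → ℝ} {b : ℝ} (hb : 0 ≤ b)
    (hholder : ∀ v, |∑ k, v k * β k| ≤ N v * b) (hdual : ∃ v, N v ≤ 1 ∧ ∑ k, v k * β k = b)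
    {n : ℕ} (hn : 0 < n) (x : Fin n → (ι → ℝ) × ℝ) {δ : ℝ} (hδ : 0 ≤ δ) :
    ⨆ (P : Measure ((ι → ℝ) × ℝ)) (_ : IsProbabilityMeasure P)
        (_ : Dc (labelCost N) P (empiricalMeasure x) ≤ ENNReal.ofReal δ),
        (∫⁻ z, ENNReal.ofReal (linearResidual β z ^ 2) ∂P) ^ (1 / 2 : ℝ)
      = (∫⁻ z, ENNReal.ofReal (linearResidual β z ^ 2) ∂empiricalMeasure x) ^ (1 / 2 : ℝ)
          + ENNReal.ofReal (√δ * b) := by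
  refine le_antisymm (iSup_le fun P => iSup₂_le fun _ hD => ?_) ?_
  · refine (rmse_le_add_sqrt_Dc hN hN0 hb hholder (hD.trans_lt ENNReal.ofReal_lt_top).ne).trans ?_
    rw [ENNReal.ofReal_mul (Real.sqrt_nonneg δ), Real.sqrt_eq_rpow,
      ← ENNReal.ofReal_rpow_of_nonneg hδ (by norm_num)]
    gcongr
  · obtain ⟨P, hP, hD, hval⟩ := exists_rmse_eq_add_of_dual hN0 hNsmul hb hdual hn x hδ
    exact hval ▸ le_iSup₂_of_le P hP (le_iSup_of_le hD le_rfl)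

end Regression

theorem statement5_general {d dbar : ℕ} {n : ℕ} (hn : 0 < n)
    (G : Fin dbar → Finset (Fin d)) (hG : IsPartition G)
    (α : Fin dbar → ℝ) (hα : ∀ i, 0 < α i)
    (p q s t : ℝ≥0∞)
    (hpq : 1 / p + 1 / q = 1) (hst : 1 / s + 1 / t = 1)
    (X : Fin n → Fin d → ℝ) (Y : Fin n → ℝ) (δ : ℝ) (hδ : 0 < δ) :
    (⨅ β : Fin d → ℝ,
        ⨆ (P : Measure ((Fin d → ℝ) × ℝ)) (_ : IsProbabilityMeasure P)
          (_ : Dc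
              (fun u w => if u.2 = w.2 then
                ENNReal.ofReal ((gnorm G (fun i => (α i)⁻¹) q t (u.1 - w.1)) ^ 2) else ⊤)
              P ((n : ℝ≥0∞)⁻¹ • ∑ i : Fin n, Measure.dirac (X i, Y i)) ≤ ENNReal.ofReal δ),
          (∫⁻ z, ENNReal.ofReal ((z.2 - ∑ k, z.1 k * β k) ^ 2) ∂P) ^ (1 / 2 : ℝ))
      = ⨅ β : Fin d → ℝ,
          ((∫⁻ z, ENNReal.ofReal ((z.2 - ∑ k, z.1 k * β k) ^ 2)
                ∂((n : ℝ≥0∞)⁻¹ • ∑ i : Fin n, Measure.dirac (X i, Y i))) ^ (1 / 2 : ℝ)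
            + ENNReal.ofReal (Real.sqrt δ * gnorm G α p s β)) := by
  have : p.HolderConjugate q := ENNReal.holderConjugate_iff.mpr (by simpa only [one_div] using hpq)
  have : s.HolderConjugate t := ENNReal.holderConjugate_iff.mpr (by simpa only [one_div] using hst)
  have hq := ENNReal.HolderConjugate.one_le q p
  have ht := ENNReal.HolderConjugate.one_le t s
  refine iInf_congr fun β => ?_
  exact iSup_rmse_Dc_le_eq (continuous_gnorm hq ht) (gnorm_nonneg ht) (gnorm_smul hq ht)
    (gnorm_nonneg (ENNReal.HolderConjugate.one_le s t) β)
    (fun v => abs_sum_mul_le_gnorm_mul_gnorm hG hα v β)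
    (exists_gnorm_le_one_sum_mul_eq hG hα β) hn (fun i => (X i, Y i)) hδ.le

theorem statement5 {d dbar : ℕ} (hd : 1 ≤ d) {n : ℕ} (hn : 0 < n)
    (G : Fin dbar → Finset (Fin d)) (hG : IsPartition G)
    (α : Fin dbar → ℝ) (hα : ∀ i, 0 < α i)
    (p q s t : ℝ≥0∞) (hp : 1 ≤ p) (hq : 1 ≤ q) (hs : 1 ≤ s) (ht : 1 ≤ t)
    (hpq : 1 / p + 1 / q = 1) (hst : 1 / s + 1 / t = 1)
    (X : Fin n → Fin d → ℝ) (Y : Fin n → ℝ) (δ : ℝ) (hδ : 0 < δ) :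
    (⨅ β : Fin d → ℝ,
        ⨆ (P : Measure ((Fin d → ℝ) × ℝ)) (_ : IsProbabilityMeasure P)
          (_ : Dc
              (fun u w => if u.2 = w.2 then
                ENNReal.ofReal ((gnorm G (fun i => (α i)⁻¹) q t (u.1 - w.1)) ^ 2) else ⊤)
              P ((n : ℝ≥0∞)⁻¹ • ∑ i : Fin n, Measure.dirac (X i, Y i)) ≤ ENNReal.ofReal δ),
          (∫⁻ z, ENNReal.ofReal ((z.2 - ∑ k, z.1 k * β k) ^ 2) ∂P) ^ (1 / 2 : ℝ))
      = ⨅ β : Fin d → ℝ,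
          ((∫⁻ z, ENNReal.ofReal ((z.2 - ∑ k, z.1 k * β k) ^ 2)
                ∂((n : ℝ≥0∞)⁻¹ • ∑ i : Fin n, Measure.dirac (X i, Y i))) ^ (1 / 2 : ℝ)
            + ENNReal.ofReal (Real.sqrt δ * gnorm G α p s β)) :=
  statement5_general hn G hG α hα p q s t hpq hst X Y δ hδ
end

section
/- Let δ ≥ 0, E ≥ 0 and b ≥ 0 be real numbers. Then the infimum over γ > b² of γδ + γE/(γ − b²) equals (√E + b√δ)². Moreover, if δ > 0, E > 0 and b > 0, the infimum is attained at γ = b² + b√(E/δ). -/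
open scoped ENNReal BigOperators
open MeasureTheory Filter

/-!
Write `E = a²`, `δ = c²` and `γ = b² + t` with `t > 0`. Completing the square gives
`γ c² + γ a² / t = (a + b c)² + (c t - a b)² / t`,
so every value is at least `(a + b c)²`, with equality exactly when `c t = a b`.
When `a b` and `c` are positive this pins down the minimiser `t = a b / c`; otherwise the
remainder `(c t - a b)² / t` still tends to `0`, as `t → 0` (if `a b = 0`) or `t → ∞` (if `c = 0`).
-/

lemma mul_sq_add_mul_sq_div_sub_eq (a b c γ : ℝ) (hγ : γ ≠ b ^ 2) :
    γ * c ^ 2 + γ * a ^ 2 / (γ - b ^ 2)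
      = (a + b * c) ^ 2 + (c * (γ - b ^ 2) - a * b) ^ 2 / (γ - b ^ 2) := by
  have ht : γ - b ^ 2 ≠ 0 := sub_ne_zero.mpr hγ
  field_simp
  ring

lemma sq_le_mul_sq_add_mul_sq_div_sub (a b c : ℝ) {γ : ℝ} (hγ : b ^ 2 < γ) :
    (a + b * c) ^ 2 ≤ γ * c ^ 2 + γ * a ^ 2 / (γ - b ^ 2) := by
  rw [mul_sq_add_mul_sq_div_sub_eq a b c γ hγ.ne']
  have ht : 0 < γ - b ^ 2 := sub_pos.mpr hγ
  exact le_add_of_nonneg_right (div_nonneg (sq_nonneg _) ht.le)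

lemma exists_sq_mul_sub_div_lt {c m ε : ℝ} (hc : 0 ≤ c) (hm : 0 ≤ m) (hε : 0 < ε) :
    ∃ t, 0 < t ∧ (c * t - m) ^ 2 / t < ε := by
  rcases hc.eq_or_lt with rfl | hc
  · refine ⟨m ^ 2 / ε + 1, by positivity, ?_⟩
    rw [zero_mul, zero_sub, neg_sq, div_lt_iff₀ (by positivity), mul_add, mul_one,
      mul_div_cancel₀ _ hε.ne']
    linarith
  rcases hm.eq_or_lt with rfl | hm
  · refine ⟨ε / (2 * c ^ 2), by positivity, ?_⟩
    field_simp
    nlinarith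
  · exact ⟨m / c, div_pos hm hc, by rw [mul_div_cancel₀ _ hc.ne', sub_self]; simpa⟩

theorem isGLB_mul_sq_add_mul_sq_div_sub {a b c : ℝ} (ha : 0 ≤ a) (hb : 0 ≤ b) (hc : 0 ≤ c) :
    IsGLB {v : ℝ | ∃ γ : ℝ, b ^ 2 < γ ∧ v = γ * c ^ 2 + γ * a ^ 2 / (γ - b ^ 2)}
      ((a + b * c) ^ 2) := by
  refine ⟨?_, fun x hx => le_of_forall_pos_lt_add fun ε hε => ?_⟩
  · rintro v ⟨γ, hγ, rfl⟩
    exact sq_le_mul_sq_add_mul_sq_div_sub a b c hγ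
  · obtain ⟨t, ht, hlt⟩ := exists_sq_mul_sub_div_lt hc (mul_nonneg ha hb) hε
    have hγ : b ^ 2 < b ^ 2 + t := lt_add_of_pos_right _ ht
    have hx := hx ⟨_, hγ, rfl⟩
    rw [mul_sq_add_mul_sq_div_sub_eq a b c _ hγ.ne', add_sub_cancel_left] at hx
    linarith

lemma mul_sq_add_mul_sq_div_sub_at_minimizer {a b c : ℝ} (ha : a ≠ 0) (hb : b ≠ 0)
    (hc : c ≠ 0) :
    (b ^ 2 + b * (a / c)) * c ^ 2 + (b ^ 2 + b * (a / c)) * a ^ 2 / (b ^ 2 + b * (a / c) - b ^ 2)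
      = (a + b * c) ^ 2 := by
  have ht : b * (a / c) ≠ 0 := mul_ne_zero hb (div_ne_zero ha hc)
  have hmin : c * (b * (a / c)) - a * b = 0 := by field_simp; ring
  rw [mul_sq_add_mul_sq_div_sub_eq a b c _ (by simpa using ht), add_sub_cancel_left, hmin]
  simp

theorem statement8 (δ E b : ℝ) (hδ : 0 ≤ δ) (hE : 0 ≤ E) (hb : 0 ≤ b) :
    sInf {v : ℝ | ∃ γ : ℝ, b ^ 2 < γ ∧ v = γ * δ + γ * E / (γ - b ^ 2)}
        = (Real.sqrt E + b * Real.sqrt δ) ^ 2 ∧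
      (0 < δ → 0 < E → 0 < b →
        (b ^ 2 + b * Real.sqrt (E / δ)) * δ +
            (b ^ 2 + b * Real.sqrt (E / δ)) * E / ((b ^ 2 + b * Real.sqrt (E / δ)) - b ^ 2)
          = (Real.sqrt E + b * Real.sqrt δ) ^ 2) := by
  obtain ⟨a, ha, rfl⟩ : ∃ a, 0 ≤ a ∧ a ^ 2 = E := ⟨√E, Real.sqrt_nonneg E, Real.sq_sqrt hE⟩
  obtain ⟨c, hc, rfl⟩ : ∃ c, 0 ≤ c ∧ c ^ 2 = δ := ⟨√δ, Real.sqrt_nonneg δ, Real.sq_sqrt hδ⟩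
  rw [Real.sqrt_sq ha, Real.sqrt_sq hc, ← div_pow, Real.sqrt_sq (div_nonneg ha hc)]
  refine ⟨(isGLB_mul_sq_add_mul_sq_div_sub ha hb hc).csInf_eq ⟨_, _, lt_add_one _, rfl⟩,
    fun hδ' hE' hb' => ?_⟩
  exact mul_sq_add_mul_sq_div_sub_at_minimizer (by rintro rfl; simp at hE') hb'.ne'
    (by rintro rfl; simp at hδ')
end

section
/- Let d ≥ 1, let G_1,…,G_d̄ be a partition of {1,…,d} into nonempty disjoint groups, let α ∈ ℝ^d̄ have strictly positive entries, and let p, s ∈ [1,∞]. Let e be a real random variable and X a random vector in ℝ^d, independent of each other, both with finite second moments, and fix β* ∈ ℝ^d. Then inf { E[ ‖eζ − (ζᵀX)β*‖_{α-(p,s)}² ] : ζ ∈ ℝ^d, ‖ζ‖_{α-(p,s)} = 1 } ≥ E[e²] − (E[|e|])². -/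
open scoped ENNReal BigOperators
open MeasureTheory Filter

open ProbabilityTheory

/-!
Write `c = ζᵀX` and `B = ‖β*‖`. Since `‖ζ‖ = 1`, the reverse triangle inequality gives
`‖eζ − cβ*‖ ≥ | |e| − B|c| |` pointwise, and as `|e|` and `B|c|` are independent,
`E(|e| − B|c|)² ≥ Var(|e| − B|c|) = Var|e| + Var(B|c|) ≥ Var|e| = E e² − (E|e|)²`.
-/

lemma lpn_norm_eq_norm {p : ℝ≥0∞} (hp : 1 ≤ p) {ι : Type} [Fintype ι]
    {β : ι → Type*} [∀ i, SeminormedAddCommGroup (β i)] (f : PiLp p β) :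
    lpn p (fun i => ‖f i‖) = ‖f‖ := by
  rcases eq_or_ne p ∞ with rfl | hp_top
  · simp [lpn, PiLp.norm_eq_ciSup]
  · have hp_pos : 0 < p.toReal := ENNReal.toReal_pos (by positivity) hp_top
    simp [lpn, PiLp.norm_eq_sum hp_pos]

/-- `x ↦ (α_i • x(G_i))_i`, into the `l_s`-product of the `l_p`-spaces of the groups: `gnorm` is
the norm of its image. -/
noncomputable def gnormCLM {d dbar : ℕ} (G : Fin dbar → Finset (Fin d)) (α : Fin dbar → ℝ)
    (p s : ℝ≥0∞) [Fact (1 ≤ p)] [Fact (1 ≤ s)] :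
    (Fin d → ℝ) →L[ℝ] PiLp s (fun i => PiLp p (fun _ : {k // k ∈ G i} => ℝ)) :=
  (PiLp.continuousLinearEquiv s ℝ _).symm.toContinuousLinearMap ∘L
    ContinuousLinearMap.pi (fun i =>
      (PiLp.continuousLinearEquiv p ℝ _).symm.toContinuousLinearMap ∘L
        (α i • ContinuousLinearMap.pi (fun j : {k // k ∈ G i} => ContinuousLinearMap.proj j.1)))

section gnorm

variable {d dbar : ℕ} {G : Fin dbar → Finset (Fin d)} {α : Fin dbar → ℝ} {p s : ℝ≥0∞}
  [Fact (1 ≤ p)] [Fact (1 ≤ s)]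

lemma gnorm_eq_norm_gnormCLM (hα : ∀ i, 0 ≤ α i) (x : Fin d → ℝ) :
    gnorm G α p s x = ‖gnormCLM G α p s x‖ := by
  rw [← lpn_norm_eq_norm Fact.out]
  unfold gnorm
  congr 1
  funext i
  simp [gnormCLM, lpn, norm_smul, abs_of_nonneg (hα i)]

lemma gnormCLM_injective (hα : ∀ i, 0 < α i) (hG : ∀ k, ∃ i, k ∈ G i) :
    Function.Injective (gnormCLM G α p s) := by
  rw [injective_iff_map_eq_zero]
  intro x hx
  funext k
  obtain ⟨i, hki⟩ := hG k
  have := congrArg (fun y => y i ⟨k, hki⟩) hx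
  simpa [gnormCLM, (hα i).ne'] using this

lemma exists_gnorm_eq_one (hd : 1 ≤ d) (hα : ∀ i, 0 < α i) (hG : ∀ k, ∃ i, k ∈ G i) :
    ∃ ζ : Fin d → ℝ, gnorm G α p s ζ = 1 := by
  set x : Fin d → ℝ := Pi.single ⟨0, hd⟩ 1
  have hx : gnormCLM G α p s x ≠ 0 :=
    (map_ne_zero_iff _ (gnormCLM_injective hα hG)).2 (by simp [x])
  refine ⟨‖gnormCLM G α p s x‖⁻¹ • x, ?_⟩
  rw [gnorm_eq_norm_gnormCLM fun i => (hα i).le, map_smul, norm_smul, norm_inv, norm_norm,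
    inv_mul_cancel₀ (norm_ne_zero_iff.2 hx)]

lemma sq_abs_sub_le_sq_gnorm (hα : ∀ i, 0 ≤ α i) {ζ : Fin d → ℝ} (hζ : gnorm G α p s ζ = 1)
    (a b : ℝ) (β : Fin d → ℝ) :
    (|a| - |b| * gnorm G α p s β) ^ 2 ≤ gnorm G α p s (fun k => a * ζ k - b * β k) ^ 2 := by
  simp only [gnorm_eq_norm_gnormCLM hα] at hζ ⊢
  have hv : (fun k => a * ζ k - b * β k) = a • ζ - b • β := rfl
  have key := abs_norm_sub_norm_le (a • gnormCLM G α p s ζ) (b • gnormCLM G α p s β)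
  rw [norm_smul, norm_smul, hζ, mul_one, Real.norm_eq_abs, Real.norm_eq_abs] at key
  rw [hv, map_sub, map_smul, map_smul, sq_le_sq, abs_norm]
  exact key

lemma MeasureTheory.MemLp.gnorm (hα : ∀ i, 0 ≤ α i) {Ω : Type*} [MeasurableSpace Ω]
    {μ : Measure Ω} {q : ℝ≥0∞} {f : Ω → Fin d → ℝ} (hf : MemLp f q μ) :
    MemLp (fun ω => gnorm G α p s (f ω)) q μ := by
  simp_rw [gnorm_eq_norm_gnormCLM hα]
  exact ((gnormCLM G α p s).comp_memLp' hf).norm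

end gnorm

lemma ProbabilityTheory.IndepFun.variance_le_integral_sq_sub {Ω : Type*} [MeasurableSpace Ω]
    {μ : Measure Ω} [IsProbabilityMeasure μ] {Y Z : Ω → ℝ} (hY : MemLp Y 2 μ) (hZ : MemLp Z 2 μ)
    (h : IndepFun Y Z μ) :
    variance Y μ ≤ ∫ ω, (Y ω - Z ω) ^ 2 ∂μ := by
  have hYZ : variance (Y + -Z) μ = variance Y μ + variance Z μ := by
    rw [(h.comp measurable_id measurable_neg).variance_add hY hZ.neg, variance_neg]
  calc variance Y μ ≤ variance (Y + -Z) μ := by rw [hYZ]; linarith [variance_nonneg Z μ]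
    _ ≤ ∫ ω, (Y + -Z) ω ^ 2 ∂μ :=
        variance_le_expectation_sq (hY.add hZ.neg).aestronglyMeasurable
    _ = ∫ ω, (Y ω - Z ω) ^ 2 ∂μ := by simp [sub_eq_add_neg]

theorem statement14 {d dbar : ℕ} (hd : 1 ≤ d)
    (G : Fin dbar → Finset (Fin d)) (hG : IsPartition G)
    (α : Fin dbar → ℝ) (hα : ∀ i, 0 < α i)
    (p s : ℝ≥0∞) (hp : 1 ≤ p) (hs : 1 ≤ s)
    {Ω : Type} [MeasurableSpace Ω] (P : Measure Ω) [IsProbabilityMeasure P]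
    (e : Ω → ℝ) (X : Ω → Fin d → ℝ)
    (hem : Measurable e) (hXm : Measurable X)
    (hindep : ProbabilityTheory.IndepFun X e P)
    (he2 : Integrable (fun ω => e ω ^ 2) P)
    (hX2 : ∀ k l, Integrable (fun ω => X ω k * X ω l) P)
    (βstar : Fin d → ℝ) :
    (∫ ω, e ω ^ 2 ∂P) - (∫ ω, |e ω| ∂P) ^ 2 ≤
      sInf {v : ℝ | ∃ ζ : Fin d → ℝ, gnorm G α p s ζ = 1 ∧
        v = ∫ ω, (gnorm G α p s (fun k => e ω * ζ k - (∑ l, ζ l * X ω l) * βstar k)) ^ 2 ∂P} := by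
  have : Fact (1 ≤ p) := ⟨hp⟩
  have : Fact (1 ≤ s) := ⟨hs⟩
  have hα₀ : ∀ i, 0 ≤ α i := fun i => (hα i).le
  obtain ⟨ζ₀, hζ₀⟩ := exists_gnorm_eq_one (p := p) (s := s) hd hα hG.2.2
  refine le_csInf ⟨_, ζ₀, hζ₀, rfl⟩ ?_
  rintro _ ⟨ζ, hζ, rfl⟩
  set B := gnorm G α p s βstar
  set c : Ω → ℝ := fun ω => ∑ l, ζ l * X ω l
  have he : MemLp e 2 P := (memLp_two_iff_integrable_sq hem.aestronglyMeasurable).2 he2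
  have hc : MemLp c 2 P := by
    refine memLp_finsetSum _ fun l _ => MemLp.const_mul ?_ (ζ l)
    have hXl : Measurable fun ω => X ω l := (measurable_pi_apply l).comp hXm
    refine (memLp_two_iff_integrable_sq hXl.aestronglyMeasurable).2 ?_
    simpa [sq] using hX2 l l
  have hψ : Measurable fun x : Fin d → ℝ => B * |∑ l, ζ l * x l| := by fun_prop
  have hind : IndepFun (fun ω => |e ω|) (fun ω => B * |c ω|) P :=
    hindep.symm.comp measurable_abs hψ
  calc (∫ ω, e ω ^ 2 ∂P) - (∫ ω, |e ω| ∂P) ^ 2 = variance (fun ω => |e ω|) P := by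
        rw [show (fun ω => |e ω|) = |e| from rfl, variance_eq_sub he.abs]
        simp [Pi.abs_def]
    _ ≤ ∫ ω, (|e ω| - B * |c ω|) ^ 2 ∂P :=
        hind.variance_le_integral_sq_sub he.abs (hc.abs.const_mul B)
    _ ≤ _ := by
      refine integral_mono (he.abs.sub (hc.abs.const_mul B)).integrable_sq
        ((memLp_pi_iff.2 fun k => (he.mul_const (ζ k)).sub (hc.mul_const (βstar k))).gnorm
          hα₀).integrable_sq fun ω => ?_
      simpa [mul_comm B] using sq_abs_sub_le_sq_gnorm hα₀ hζ (e ω) (c ω) βstar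
end
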